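/- For all n ∈ ℤ⁺ and all real r with 0 < r ≤ 1, (r² + 10r + 1)·(Σ_{k=1}^{n} r^k)²·(Σ_{k=1}^{n} k² r^k) ≥ r² · (Σ_{k=1}^{n} k⁴ r^k). -/

import Mathlib

/-!
As power series, `∑ k⁴ xᵏ = x (1 + x) (1 + 10x + x²) / (1 - x)⁵` and
`(∑_{i ≥ 1} xⁱ)² · ∑_{k ≥ 1} k² xᵏ = x³ (1 + x) / (1 - x)⁵`, so `x² ∑ k⁴ xᵏ` is
`(1 + 10x + x²)` times the triple product. After truncation at degree `n` the identity becomes an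
inequality: every coefficient `c m` of the product is nonnegative, so the left side is at most
`(r² + 10r + 1) ∑_{m ≤ n+2} c m rᵐ`, and the terms `k² rⁱ⁺ʲ⁺ᵏ` with `i + j + k ≤ n + 2` all have
`i, j, k ≤ n`, so this partial sum is dominated by the product of the three truncated sums.
-/

open Finset

lemma sum_Icc_one_eq_sum_range {M : Type*} [AddCommMonoid M] (f : ℕ → M) (n : ℕ) :
    ∑ k ∈ Icc 1 n, f k = ∑ k ∈ range n, f (k + 1) := by
  rw [range_eq_Ico, sum_Ico_add' f 0 n 1]
  rfl

lemma sum_Icc_add_le_sum_range {M : Type*} [AddCommMonoid M] [PartialOrder M]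
    [IsOrderedAddMonoid M] {f : ℕ → M} (hf : ∀ m, 0 ≤ f m) {a b j N : ℕ} (h : b + j < N) :
    ∑ k ∈ Icc a b, f (k + j) ≤ ∑ m ∈ range N, f m := by
  calc ∑ k ∈ Icc a b, f (k + j) = ∑ m ∈ Icc (a + j) (b + j), f m := by
        rw [← map_add_right_Icc, sum_map]; rfl
    _ ≤ ∑ m ∈ range N, f m := sum_le_sum_of_subset_of_nonneg
        (fun m hm => mem_range.mpr (by simp only [mem_Icc] at hm; omega)) fun m _ _ => hf m

lemma sum_range_sum_antidiagonal_le {R : Type*} [CommSemiring R] [PartialOrder R]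
    [IsOrderedRing R] {a b : ℕ → R} (ha : ∀ k, 0 ≤ a k) (hb : ∀ l, 0 ≤ b l) (N : ℕ) :
    ∑ m ∈ range N, ∑ p ∈ antidiagonal m, a p.1 * b p.2
      ≤ (∑ k ∈ range N, a k) * ∑ l ∈ range N, b l := by
  simp only [Nat.sum_antidiagonal_eq_sum_range_succ_mk]
  rw [sum_range_diag_flip N fun k l => a k * b l, sum_mul]
  refine sum_le_sum fun k _ => ?_
  rw [mul_sum]
  exact sum_le_sum_of_subset_of_nonneg (range_subset_range.mpr (Nat.sub_le N k))
    fun l _ _ => mul_nonneg (ha k) (hb l)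

lemma sum_antidiagonal_pow_mul_pow {R : Type*} [CommSemiring R] (r : R) (m : ℕ) :
    ∑ p ∈ antidiagonal m, r ^ p.1 * r ^ p.2 = (m + 1) * r ^ m := by
  rw [sum_congr rfl fun p hp => by rw [← pow_add, mem_antidiagonal.mp hp], sum_const,
    Nat.card_antidiagonal, nsmul_eq_mul]
  push_cast; ring

lemma sum_antidiagonal_add_one_sq (m : ℕ) :
    ∑ p ∈ antidiagonal m, ((p.1 : ℝ) + 1) ^ 2 = ((m : ℝ) + 1) * (m + 2) * (2 * m + 3) / 6 := by
  induction m with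
  | zero => norm_num
  | succ m ih =>
    rw [Nat.sum_antidiagonal_succ', ih]
    push_cast; ring

/-- The coefficient of `xᵐ` in `(∑_{i ≥ 1} xⁱ)² · ∑_{k ≥ 1} k² xᵏ = x³ (1 + x) / (1 - x)⁵`. -/
noncomputable def convCoeff (m : ℕ) : ℝ := ((m : ℝ) - 2) * ((m : ℝ) - 1) ^ 2 * m / 12

lemma convCoeff_nonneg (m : ℕ) : 0 ≤ convCoeff m := by
  rcases m with _ | _ | m
  · norm_num [convCoeff]
  · norm_num [convCoeff]
  · unfold convCoeff
    push_cast
    rw [show ((m : ℝ) + 1 + 1 - 2) * ((m : ℝ) + 1 + 1 - 1) ^ 2 * ((m : ℝ) + 1 + 1)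
      = m * (m + 1) ^ 2 * (m + 2) by ring]
    positivity

lemma convCoeff_add_ten_mul_add (k : ℕ) :
    convCoeff k + 10 * convCoeff (k + 1) + convCoeff (k + 2) = (k : ℝ) ^ 4 := by
  unfold convCoeff; push_cast; ring

lemma convCoeff_add_three (m : ℕ) :
    convCoeff (m + 3) = ∑ p ∈ antidiagonal m, ((p.1 : ℝ) + 1) ^ 2 * (p.2 + 1) := by
  induction m with
  | zero => norm_num [convCoeff]
  | succ m ih =>
    have hsplit : ∑ p ∈ antidiagonal m, ((p.1 : ℝ) + 1) ^ 2 * (((p.2 + 1 : ℕ) : ℝ) + 1)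
        = ∑ p ∈ antidiagonal m, ((p.1 : ℝ) + 1) ^ 2 * (p.2 + 1)
          + ∑ p ∈ antidiagonal m, ((p.1 : ℝ) + 1) ^ 2 := by
      rw [← sum_add_distrib]
      exact sum_congr rfl fun p _ => by push_cast; ring
    rw [Nat.sum_antidiagonal_succ', hsplit, ← ih, sum_antidiagonal_add_one_sq]
    unfold convCoeff; push_cast; ring

lemma sum_range_add_three_convCoeff (n : ℕ) (r : ℝ) : ∑ m ∈ range (n + 3), convCoeff m * r ^ m
      = r ^ 3 * ∑ m ∈ range n, convCoeff (m + 3) * r ^ m := by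
  simp only [sum_range_succ', mul_sum]
  norm_num [convCoeff]
  exact sum_congr rfl fun m _ => by ring

lemma sq_mul_sum_pow_four_le {r : ℝ} (hr : 0 ≤ r) (n : ℕ) :
    r ^ 2 * ∑ k ∈ Icc 1 n, (k : ℝ) ^ 4 * r ^ k
      ≤ (r ^ 2 + 10 * r + 1) * ∑ m ∈ range (n + 3), convCoeff m * r ^ m := by
  set Q := ∑ m ∈ range (n + 3), convCoeff m * r ^ m
  have shift (j : ℕ) (hj : j ≤ 2) : ∑ k ∈ Icc 1 n, convCoeff (k + j) * r ^ (k + j) ≤ Q :=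
    sum_Icc_add_le_sum_range (fun m => mul_nonneg (convCoeff_nonneg m) (pow_nonneg hr m))
      (by omega)
  calc r ^ 2 * ∑ k ∈ Icc 1 n, (k : ℝ) ^ 4 * r ^ k
      = r ^ 2 * ∑ k ∈ Icc 1 n, convCoeff k * r ^ k
        + 10 * r * ∑ k ∈ Icc 1 n, convCoeff (k + 1) * r ^ (k + 1)
        + ∑ k ∈ Icc 1 n, convCoeff (k + 2) * r ^ (k + 2) := by
        simp only [mul_sum, ← sum_add_distrib]
        refine sum_congr rfl fun k _ => ?_
        rw [← convCoeff_add_ten_mul_add]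
        ring
    _ ≤ r ^ 2 * Q + 10 * r * Q + Q := by
        gcongr
        exacts [shift 0 (by norm_num), shift 1 (by norm_num), shift 2 le_rfl]
    _ = (r ^ 2 + 10 * r + 1) * Q := by ring

lemma sum_range_convCoeff_add_three_le {r : ℝ} (hr : 0 ≤ r) (N : ℕ) :
    ∑ m ∈ range N, convCoeff (m + 3) * r ^ m
      ≤ (∑ k ∈ range N, ((k : ℝ) + 1) ^ 2 * r ^ k) * (∑ i ∈ range N, r ^ i) ^ 2 := by
  have hr' : ∀ i, 0 ≤ r ^ i := fun i => pow_nonneg hr i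
  calc ∑ m ∈ range N, convCoeff (m + 3) * r ^ m
      = ∑ m ∈ range N, ∑ p ∈ antidiagonal m,
          ((p.1 : ℝ) + 1) ^ 2 * r ^ p.1 * ∑ q ∈ antidiagonal p.2, r ^ q.1 * r ^ q.2 := by
        refine sum_congr rfl fun m _ => ?_
        rw [convCoeff_add_three, sum_mul]
        refine sum_congr rfl fun p hp => ?_
        rw [sum_antidiagonal_pow_mul_pow, ← mem_antidiagonal.mp hp, pow_add]
        ring
    _ ≤ (∑ k ∈ range N, ((k : ℝ) + 1) ^ 2 * r ^ k)
          * ∑ l ∈ range N, ∑ q ∈ antidiagonal l, r ^ q.1 * r ^ q.2 :=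
        sum_range_sum_antidiagonal_le (a := fun k => ((k : ℝ) + 1) ^ 2 * r ^ k)
          (b := fun l => ∑ q ∈ antidiagonal l, r ^ q.1 * r ^ q.2) (fun k => by positivity)
          (fun l => sum_nonneg fun q _ => mul_nonneg (hr' _) (hr' _)) N
    _ ≤ (∑ k ∈ range N, ((k : ℝ) + 1) ^ 2 * r ^ k) * (∑ i ∈ range N, r ^ i) ^ 2 := by
        rw [sq]
        exact mul_le_mul_of_nonneg_left (sum_range_sum_antidiagonal_le hr' hr' N)
          (sum_nonneg fun k _ => by positivity)

theorem stmt7_general (n : ℕ) (r : ℝ) (hr0 : 0 < r) :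
    (r ^ 2 + 10 * r + 1) * (∑ k ∈ Finset.Icc 1 n, r ^ k) ^ 2
        * (∑ k ∈ Finset.Icc 1 n, (k : ℝ) ^ 2 * r ^ k)
      ≥ r ^ 2 * (∑ k ∈ Finset.Icc 1 n, (k : ℝ) ^ 4 * r ^ k) := by
  have hS0 : ∑ k ∈ Icc 1 n, r ^ k = r * ∑ i ∈ range n, r ^ i := by
    rw [sum_Icc_one_eq_sum_range (fun k => r ^ k), mul_sum]
    exact sum_congr rfl fun i _ => pow_succ' r i
  have hS2 : ∑ k ∈ Icc 1 n, (k : ℝ) ^ 2 * r ^ k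
      = r * ∑ k ∈ range n, ((k : ℝ) + 1) ^ 2 * r ^ k := by
    rw [sum_Icc_one_eq_sum_range (fun k => (k : ℝ) ^ 2 * r ^ k), mul_sum]
    exact sum_congr rfl fun k _ => by push_cast; ring
  rw [ge_iff_le, hS0, hS2]
  calc r ^ 2 * ∑ k ∈ Icc 1 n, (k : ℝ) ^ 4 * r ^ k
      ≤ (r ^ 2 + 10 * r + 1) * r ^ 3 * ∑ m ∈ range n, convCoeff (m + 3) * r ^ m := by
        rw [mul_assoc, ← sum_range_add_three_convCoeff]
        exact sq_mul_sum_pow_four_le hr0.le n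
    _ ≤ (r ^ 2 + 10 * r + 1) * r ^ 3
          * ((∑ k ∈ range n, ((k : ℝ) + 1) ^ 2 * r ^ k) * (∑ i ∈ range n, r ^ i) ^ 2) := by
        gcongr; exact sum_range_convCoeff_add_three_le hr0.le n
    _ = _ := by ring

theorem stmt7 (n : ℕ) (hn : 1 ≤ n) (r : ℝ) (hr0 : 0 < r) (hr1 : r ≤ 1) :
    (r ^ 2 + 10 * r + 1) * (∑ k ∈ Finset.Icc 1 n, r ^ k) ^ 2
        * (∑ k ∈ Finset.Icc 1 n, (k : ℝ) ^ 2 * r ^ k)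
      ≥ r ^ 2 * (∑ k ∈ Finset.Icc 1 n, (k : ℝ) ^ 4 * r ^ k) :=
  stmt7_general n r hr0
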